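/- arXiv:2109.06738 — 2 statements merged into one kernel-verified Lean document; each statement's English description precedes it below -/
import Mathlib

section
/- Let r₁, r₂ be positive integers, r = r₁ + r₂, and let α₁, α₂, β₁, β₂ be real numbers, with α = α₁ + α₂ and β = β₁ + β₂ + α₁·α₂ (the Whitney formulas for first and second Chern classes of an extension). If 2r₁β₁ − (r₁−1)α₁² ≥ 0 and 2r₂β₂ − (r₂−1)α₂² ≥ 0, then 2rβ − (r−1)α² = 2(r₁+r₂)(β₁+β₂+α₁α₂) − (r₁+r₂−1)(α₁+α₂)² ≥ −r₁r₂(α₁/r₁ − α₂/r₂)². -/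
/-- Bogomolov–Gieseker discriminant of an extension: numerical core.
If `2rᵢbᵢ − (rᵢ−1)aᵢᵢ ≥ 0` for `i = 1,2`, then with `r = r₁ + r₂`,
`2r(b₁+b₂+a₁₂) − (r−1)(a₁₁+2a₁₂+a₂₂) ≥ −r₁r₂(a₁₁/r₁² − 2a₁₂/(r₁r₂) + a₂₂/r₂²)`. -/
theorem stmt_0 (r₁ r₂ : ℕ) (hr₁ : 0 < r₁) (hr₂ : 0 < r₂)
    (a₁₁ a₁₂ a₂₂ b₁ b₂ : ℝ)
    (h₁ : 0 ≤ 2 * (r₁ : ℝ) * b₁ - ((r₁ : ℝ) - 1) * a₁₁)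
    (h₂ : 0 ≤ 2 * (r₂ : ℝ) * b₂ - ((r₂ : ℝ) - 1) * a₂₂) :
    2 * ((r₁ : ℝ) + r₂) * (b₁ + b₂ + a₁₂)
      - ((r₁ : ℝ) + r₂ - 1) * (a₁₁ + 2 * a₁₂ + a₂₂)
    ≥ - (r₁ : ℝ) * r₂ *
        (a₁₁ / (r₁ : ℝ) ^ 2 - 2 * a₁₂ / ((r₁ : ℝ) * r₂) + a₂₂ / (r₂ : ℝ) ^ 2) := by
  have p₁ : (0:ℝ) < r₁ := by exact_mod_cast hr₁
  have p₂ : (0:ℝ) < r₂ := by exact_mod_cast hr₂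
  have key : 2 * ((r₁ : ℝ) + r₂) * (b₁ + b₂ + a₁₂)
      - ((r₁ : ℝ) + r₂ - 1) * (a₁₁ + 2 * a₁₂ + a₂₂)
      + (r₁ : ℝ) * r₂ *
        (a₁₁ / (r₁ : ℝ) ^ 2 - 2 * a₁₂ / ((r₁ : ℝ) * r₂) + a₂₂ / (r₂ : ℝ) ^ 2)
      = (((r₁ : ℝ) + r₂) / r₁) * (2 * (r₁ : ℝ) * b₁ - ((r₁ : ℝ) - 1) * a₁₁)
      + (((r₁ : ℝ) + r₂) / r₂) * (2 * (r₂ : ℝ) * b₂ - ((r₂ : ℝ) - 1) * a₂₂) := by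
    field_simp
    ring
  nlinarith [mul_nonneg (div_nonneg (le_of_lt (by linarith : (0:ℝ) < r₁ + r₂)) p₁.le) h₁,
    mul_nonneg (div_nonneg (le_of_lt (by linarith : (0:ℝ) < r₁ + r₂)) p₂.le) h₂]
end

section
/- Let q be a quadratic form on a finite-dimensional real vector space V and G: V → ℝ a homogeneous polynomial function of degree 2(n−1), n ≥ 2. Suppose G and all its derivatives up to order n−2 vanish on the zero set Z(q) of q, and suppose Z(q) is Zariski-dense enough that any polynomial vanishing to order n−1 along Z(q) is divisible by q^{n−1} (e.g. q is irreducible and nondegenerate of rank ≥ 3 over ℂ). Then G = C·q^{n−1} for some constant C ∈ ℝ. -/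
open MvPolynomial

/-!
By the Nullstellensatz, a polynomial vanishing on the quadric `{q = 0}` is divisible by the
prime `q`. Divisibility then climbs one power at a time: if `q ^ (j+1)` divides both `f` and
`∂ f`, write `f = q ^ (j+1) H`; then `q` divides `(j+1) H ∂q`, and as soon as `∂q` is not a
multiple of `q` (some partial derivative of a quadratic form is a nonzero linear form), `q ∣ H`.
Starting from the derivatives of order `n - 2` this yields `q ^ (n-1) ∣ G`, and comparing degrees
forces the quotient to be constant.
-/

section Derivation

variable {R A ι : Type*} [CommSemiring R] [CommRing A] [IsDomain A] [Algebra R A]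

theorem pow_succ_succ_dvd_of_pow_succ_dvd (D : Derivation R A A) {q f : A} (hq : Prime q)
    (hDq : ¬ q ∣ D q) {j : ℕ} (hj : IsUnit ((j + 1 : ℕ) : A))
    (hf : q ^ (j + 1) ∣ f) (hDf : q ^ (j + 1) ∣ D f) : q ^ (j + 2) ∣ f := by
  obtain ⟨H, rfl⟩ := hf
  have hD : D (q ^ (j + 1) * H) = q ^ (j + 1) * D H + q ^ j * ((j + 1 : ℕ) * (D q * H)) := by
    rw [Derivation.leibniz, Derivation.leibniz_pow, Nat.add_sub_cancel, smul_eq_mul,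
      smul_eq_mul, nsmul_eq_mul]
    ring
  rw [hD, dvd_add_right (dvd_mul_right _ _), pow_succ,
    mul_dvd_mul_iff_left (pow_ne_zero j hq.ne_zero), hj.dvd_mul_left] at hDf
  have hH : q ∣ H := (hq.dvd_or_dvd hDf).resolve_left hDq
  rw [pow_succ _ (j + 1)]
  exact mul_dvd_mul_left _ hH

theorem pow_dvd_of_dvd_foldl_derivation [Algebra ℚ A] (D : ι → Derivation R A A) {q f : A}
    (hq : Prime q) (i : ι) (hDq : ¬ q ∣ D i q) {N : ℕ}
    (h : ∀ l : List ι, l.length < N → q ∣ l.foldl (fun p i => D i p) f) : q ^ N ∣ f := by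
  have hunit (k : ℕ) : IsUnit ((k + 1 : ℕ) : A) := by
    simpa using (IsUnit.mk0 ((k + 1 : ℕ) : ℚ) (by positivity)).map (algebraMap ℚ A)
  suffices ∀ j (l : List ι), l.length + j ≤ N → q ^ j ∣ l.foldl (fun p i => D i p) f from
    this N [] (by simp)
  intro j
  induction j with
  | zero => simp
  | succ j ih =>
    intro l hl
    rcases j with _ | j
    · simpa using h l (by omega)
    · have hDf := ih (l ++ [i]) (by rw [List.length_append, List.length_singleton]; omega)
      rw [List.foldl_append, List.foldl_cons, List.foldl_nil] at hDf
      exact pow_succ_succ_dvd_of_pow_succ_dvd (D i) hq hDq (hunit j) (ih l (by omega)) hDf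

end Derivation

namespace MvPolynomial

variable {σ K : Type*}

theorem dvd_of_forall_eval_eq_zero_of_prime [Field K] [IsAlgClosed K] [Finite σ]
    {q p : MvPolynomial σ K} (hq : Prime q) (h : ∀ x : σ → K, eval x q = 0 → eval x p = 0) :
    q ∣ p := by
  have hp : p ∈ vanishingIdeal K (zeroLocus K (Ideal.span {q})) := by
    rw [mem_vanishingIdeal_iff]
    intro x hx
    simpa using h x (by simpa using hx q (Ideal.mem_span_singleton_self q))
  rw [vanishingIdeal_zeroLocus_eq_radical,
    ((Ideal.span_singleton_prime hq.ne_zero).mpr hq).radical] at hp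
  exact Ideal.mem_span_singleton.mp hp

variable [CommRing K] [IsDomain K]

theorem not_dvd_of_totalDegree_lt {p q : MvPolynomial σ K} (hp : p ≠ 0)
    (h : p.totalDegree < q.totalDegree) : ¬ q ∣ p := by
  rintro ⟨c, rfl⟩
  rw [totalDegree_mul_of_isDomain (left_ne_zero_of_mul hp) (right_ne_zero_of_mul hp)] at h
  omega

theorem IsHomogeneous.exists_not_dvd_pderiv [Fintype σ] [CharZero K] {φ : MvPolynomial σ K}
    {n : ℕ} (hφ : φ.IsHomogeneous n) (hn : n ≠ 0) (h0 : φ ≠ 0) : ∃ i, ¬ φ ∣ pderiv i φ := by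
  have hEuler : ∑ i : σ, X i * pderiv i φ ≠ 0 := by
    rw [hφ.sum_X_mul_pderiv]
    exact smul_ne_zero hn h0
  obtain ⟨i, -, hi⟩ := Finset.exists_ne_zero_of_sum_ne_zero hEuler
  have hi : pderiv i φ ≠ 0 := right_ne_zero_of_mul hi
  refine ⟨i, not_dvd_of_totalDegree_lt hi ?_⟩
  rw [hφ.totalDegree h0]
  exact ((hφ.pderiv (i := i)).totalDegree_le).trans_lt (by omega)

theorem IsHomogeneous.exists_eq_smul_of_dvd {q G : MvPolynomial σ K} {n : ℕ}
    (hq : q.IsHomogeneous n) (hq0 : q ≠ 0) (hG : G.IsHomogeneous n) (hdvd : q ∣ G) :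
    ∃ c : K, G = c • q := by
  obtain ⟨H, rfl⟩ := hdvd
  rcases eq_or_ne H 0 with rfl | hH
  · exact ⟨0, by simp⟩
  have hdeg := hG.totalDegree_le
  rw [totalDegree_mul_of_isDomain hq0 hH, hq.totalDegree hq0] at hdeg
  rw [totalDegree_eq_zero_iff_eq_C.mp (by omega : H.totalDegree = 0)]
  exact ⟨coeff 0 H, by rw [smul_eq_C_mul, mul_comm]⟩

end MvPolynomial

theorem stmt_7_general (m n : ℕ)
    (q G : MvPolynomial (Fin m) ℂ)
    (hq_irred : Irreducible q) (hq_homog : q.IsHomogeneous 2)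
    (hG_homog : G.IsHomogeneous (2 * (n - 1)))
    (hvanish : ∀ (k : ℕ), k ≤ n - 2 → ∀ (d : Fin k → Fin m) (x : Fin m → ℂ),
      eval x q = 0 →
      eval x ((List.ofFn d).foldl (fun p i => pderiv i p) G) = 0) :
    ∃ C : ℂ, G = C • q ^ (n - 1) := by
  have hq : Prime q := hq_irred.prime
  obtain ⟨i, hi⟩ := hq_homog.exists_not_dvd_pderiv two_ne_zero hq.ne_zero
  have hdvd : q ^ (n - 1) ∣ G := by
    refine pow_dvd_of_dvd_foldl_derivation (pderiv (R := ℂ)) hq i hi fun l hl => ?_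
    refine dvd_of_forall_eval_eq_zero_of_prime hq fun x hx => ?_
    simpa using hvanish l.length (by omega) l.get x hx
  exact (hq_homog.pow (n - 1)).exists_eq_smul_of_dvd (pow_ne_zero _ hq.ne_zero) hG_homog hdvd

/-- Algebraic heart of the Fujiki relations: if `q` is an irreducible quadratic form in
`m ≥ 3` variables over `ℂ` and `G` is homogeneous of degree `2(n−1)` such that `G` and
all of its partial derivatives of order `≤ n−2` vanish on the quadric `{q = 0}`, then
`G = C · q^(n−1)` for some constant `C`. -/
theorem stmt_7 (m n : ℕ) (hm : 3 ≤ m) (hn : 2 ≤ n)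
    (q G : MvPolynomial (Fin m) ℂ)
    (hq_irred : Irreducible q) (hq_homog : q.IsHomogeneous 2)
    (hG_homog : G.IsHomogeneous (2 * (n - 1)))
    (hvanish : ∀ (k : ℕ), k ≤ n - 2 → ∀ (d : Fin k → Fin m) (x : Fin m → ℂ),
      eval x q = 0 →
      eval x ((List.ofFn d).foldl (fun p i => pderiv i p) G) = 0) :
    ∃ C : ℂ, G = C • q ^ (n - 1) :=
  stmt_7_general m n q G hq_irred hq_homog hG_homog hvanish
end
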